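/- Syn is sound and complete with respect to proper δ-models: a formula φ is derivable in Syn if and only if 𝓜,w ⊨ φ for every proper δ-model 𝓜 = (W,∼,V) and every w ∈ W. -/

import Mathlib

/-- An agent pattern: a set of nonempty subsets of the agent set. -/
abbrev Pat (Ag : Type*) := {G : Finset (Finset Ag) // (∅ : Finset Ag) ∉ G}

variable {Ag : Type*} [DecidableEq Ag]

/-- Union of agent patterns. -/
def Pat.union (G H : Pat Ag) : Pat Ag :=
  ⟨G.1 ∪ H.1, by
    intro hmem
    rcases Finset.mem_union.mp hmem with h | h
    · exact G.2 h
    · exact H.2 h⟩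

/-- `G ∪ {B}` for a nonempty `B ⊆ Ag`. -/
def Pat.ins (B : Finset Ag) (hB : B ≠ ∅) (G : Pat Ag) : Pat Ag :=
  ⟨insert B G.1, by
    intro hmem
    rcases Finset.mem_insert.mp hmem with h | h
    · exact hB h.symm
    · exact G.2 h⟩

/-- The singleton agent pattern `{A}` for a nonempty `A ⊆ Ag`. -/
def Pat.single (A : Finset Ag) (hA : A ≠ ∅) : Pat Ag :=
  ⟨{A}, fun hmem => hA (Finset.mem_singleton.mp hmem).symm⟩

/-- Formulas of the language of synergistic knowledge: atomic propositions,
negation, conjunction, and a modality `[G]` for each agent pattern `G`. -/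
inductive Form (Ag P : Type*) : Type _ where
  | atom : P → Form Ag P
  | neg : Form Ag P → Form Ag P
  | and : Form Ag P → Form Ag P → Form Ag P
  | box : Pat Ag → Form Ag P → Form Ag P

namespace Form

variable {P : Type*}

/-- Material implication, `φ → ψ := ¬(φ ∧ ¬ψ)`. -/
def impl (φ ψ : Form Ag P) : Form Ag P := neg (and φ (neg ψ))

/-- `⊥ := p₀ ∧ ¬p₀` for a fixed atomic proposition `p₀`. -/
def falsum (p₀ : P) : Form Ag P := and (atom p₀) (neg (atom p₀))

/-- `alive(G) := ¬[G]⊥`. -/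
def aliveF (p₀ : P) (G : Pat Ag) : Form Ag P := neg (box G (falsum p₀))

/-- Finite conjunction of a list of formulas (empty conjunction is `⊤ = ¬⊥`). -/
def conjList (p₀ : P) : List (Form Ag P) → Form Ag P
  | [] => neg (falsum p₀)
  | φ :: l => and φ (conjList p₀ l)

/-- Finite disjunction of a list of formulas (empty disjunction is `⊥`). -/
def disjList (p₀ : P) : List (Form Ag P) → Form Ag P
  | [] => falsum p₀
  | φ :: l => neg (and (neg φ) (neg (disjList p₀ l)))

end Form

/-- `G^C := {H ∈ 𝒫(Ag)\{∅} | no B ∈ G has H ⊆ B}`, the complement pattern. -/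
def patC [Fintype Ag] (G : Pat Ag) : Pat Ag :=
  ⟨Finset.univ.filter fun H => H ≠ ∅ ∧ ∀ B ∈ G.1, ¬ H ⊆ B, by
    intro hmem
    exact ((Finset.mem_filter.mp hmem).2).1 rfl⟩

/-- `dead(G) := ⋀_{B ∈ G} ¬ alive({B})`. -/
noncomputable def deadF {P : Type*} (p₀ : P) (G : Pat Ag) : Form Ag P :=
  Form.conjList p₀ (G.1.attach.toList.map fun B =>
    Form.neg (Form.aliveF p₀ (Pat.single B.1 fun he => G.2 (by simpa [he] using B.2))))

/-- `NE := ⋁_{G ⊆ 𝒫(Ag)\{∅}} alive(G)`, the disjunction over all agent patterns. -/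
noncomputable def neF {P : Type*} [Fintype Ag] (p₀ : P) : Form Ag P :=
  Form.disjList p₀ (((Finset.univ : Finset (Pat Ag)).toList).map (Form.aliveF p₀))

/-- Propositional evaluation of a formula, treating boxed formulas as atoms. -/
def pEval {P : Type*} (v : Form Ag P → Prop) : Form Ag P → Prop
  | .atom p => v (.atom p)
  | .neg φ => ¬ pEval v φ
  | .and φ ψ => pEval v φ ∧ pEval v ψ
  | .box G φ => v (.box G φ)

/-- A propositional tautology: true under every propositional evaluation. -/
def Tautology {P : Type*} (φ : Form Ag P) : Prop := ∀ v, pEval v φ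

/-- A pre-model: a symmetric and transitive relation for each agent pattern,
together with a valuation. -/
structure PreModel (Ag W P : Type*) where
  rel : Pat Ag → W → W → Prop
  symm : ∀ G, Symmetric (rel G)
  trans : ∀ G, Transitive (rel G)
  val : W → Set P

/-- Truth in a pre-model. -/
def KSat {W P : Type*} (M : PreModel Ag W P) : Form Ag P → W → Prop
  | .atom p, w => p ∈ M.val w
  | .neg φ, w => ¬ KSat M φ w
  | .and φ ψ, w => KSat M φ w ∧ KSat M ψ w
  | .box G φ, w => ∀ v, M.rel G w v → KSat M φ v

/-- κ-models: pre-models satisfying (K1)–(K4) and (NE). -/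
structure IsKappa {W P : Type*} (M : PreModel Ag W P) : Prop where
  k1 : ∀ G H w, M.rel G w w → M.rel H w w → M.rel (Pat.union G H) w w
  k2 : ∀ (G : Pat Ag) (A B : Finset Ag) (hAB : A ∪ B ≠ ∅) w, A ∈ G.1 → B ∈ G.1 →
      M.rel G w w → M.rel (Pat.single (A ∪ B) hAB) w w
  k3 : ∀ G H : Pat Ag, G.1 ⊆ H.1 → ∀ w v, M.rel H w v → M.rel G w v
  k4 : ∀ (G : Pat Ag) (B : Finset Ag) (hB : B ≠ ∅), (∃ A ∈ G.1, B ⊆ A) → ∀ w v,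
      M.rel G w v → M.rel (Pat.ins B hB G) w v
  ne : ∀ w, ∃ G, M.rel G w w

/-- The axiom system `Syn⁻` (the system `Syn` without axiom (P)). -/
inductive SynMinusD {P : Type*} [Fintype Ag] (p₀ : P) : Form Ag P → Prop where
  | taut {φ} : Tautology φ → SynMinusD p₀ φ
  | axK (G : Pat Ag) (φ ψ) :
      SynMinusD p₀ (.impl (.box G (.impl φ ψ)) (.impl (.box G φ) (.box G ψ)))
  | axB (G : Pat Ag) (φ) :
      SynMinusD p₀ (.impl φ (.box G (.neg (.box G (.neg φ)))))
  | ax4 (G : Pat Ag) (φ) :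
      SynMinusD p₀ (.impl (.box G φ) (.box G (.box G φ)))
  | axT (G : Pat Ag) (φ) :
      SynMinusD p₀ (.impl (Form.aliveF p₀ G) (.impl (.box G φ) φ))
  | axNE : SynMinusD p₀ (neF p₀)
  | axMono {G H : Pat Ag} (φ) : G.1 ⊆ H.1 →
      SynMinusD p₀ (.impl (.box G φ) (.box H φ))
  | axEquiv {G : Pat Ag} {B : Finset Ag} (hB : B ≠ ∅) (φ) : (∃ A ∈ G.1, B ⊆ A) →
      SynMinusD p₀ (.impl (.box (Pat.ins B hB G) φ) (.box G φ))
  | axUnion (G H : Pat Ag) :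
      SynMinusD p₀ (.impl (.and (Form.aliveF p₀ G) (Form.aliveF p₀ H))
        (Form.aliveF p₀ (Pat.union G H)))
  | axClo {G : Pat Ag} {A B : Finset Ag} (hAB : A ∪ B ≠ ∅) : A ∈ G.1 → B ∈ G.1 →
      SynMinusD p₀ (.impl (Form.aliveF p₀ G) (Form.aliveF p₀ (Pat.single (A ∪ B) hAB)))
  | mp {φ ψ} : SynMinusD p₀ (.impl φ ψ) → SynMinusD p₀ φ → SynMinusD p₀ ψ
  | nec (G : Pat Ag) {φ} : SynMinusD p₀ φ → SynMinusD p₀ (.box G φ)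

/-- The axiom system `Syn`: `Syn⁻` together with axiom (P). -/
inductive SynD {Ag P : Type*} [DecidableEq Ag] [Fintype Ag] (p₀ : P) : Form Ag P → Prop where
  | taut {φ} : Tautology φ → SynD p₀ φ
  | axK (G : Pat Ag) (φ ψ) :
      SynD p₀ (.impl (.box G (.impl φ ψ)) (.impl (.box G φ) (.box G ψ)))
  | axB (G : Pat Ag) (φ) :
      SynD p₀ (.impl φ (.box G (.neg (.box G (.neg φ)))))
  | ax4 (G : Pat Ag) (φ) :
      SynD p₀ (.impl (.box G φ) (.box G (.box G φ)))
  | axT (G : Pat Ag) (φ) :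
      SynD p₀ (.impl (Form.aliveF p₀ G) (.impl (.box G φ) φ))
  | axP (G : Pat Ag) (φ) :
      SynD p₀ (.impl
        (.and (Form.aliveF p₀ G) (.and (deadF p₀ (patC G)) φ))
        (.box G (.impl (deadF p₀ (patC G)) φ)))
  | axNE : SynD p₀ (neF p₀)
  | axMono {G H : Pat Ag} (φ) : G.1 ⊆ H.1 →
      SynD p₀ (.impl (.box G φ) (.box H φ))
  | axEquiv {G : Pat Ag} {B : Finset Ag} (hB : B ≠ ∅) (φ) : (∃ A ∈ G.1, B ⊆ A) →
      SynD p₀ (.impl (.box (Pat.ins B hB G) φ) (.box G φ))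
  | axUnion (G H : Pat Ag) :
      SynD p₀ (.impl (.and (Form.aliveF p₀ G) (Form.aliveF p₀ H))
        (Form.aliveF p₀ (Pat.union G H)))
  | axClo {G : Pat Ag} {A B : Finset Ag} (hAB : A ∪ B ≠ ∅) : A ∈ G.1 → B ∈ G.1 →
      SynD p₀ (.impl (Form.aliveF p₀ G) (Form.aliveF p₀ (Pat.single (A ∪ B) hAB)))
  | mp {φ ψ} : SynD p₀ (.impl φ ψ) → SynD p₀ φ → SynD p₀ ψ
  | nec (G : Pat Ag) {φ} : SynD p₀ φ → SynD p₀ (.box G φ)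

/-- δ-models: pre-models satisfying (K2), (K3), (K4), (NE) and the standard
group knowledge property (D). -/
structure IsDelta {Ag W P : Type*} [DecidableEq Ag] (M : PreModel Ag W P) : Prop where
  k2 : ∀ (G : Pat Ag) (A B : Finset Ag) (hAB : A ∪ B ≠ ∅) w, A ∈ G.1 → B ∈ G.1 →
      M.rel G w w → M.rel (Pat.single (A ∪ B) hAB) w w
  k3 : ∀ G H : Pat Ag, G.1 ⊆ H.1 → ∀ w v, M.rel H w v → M.rel G w v
  k4 : ∀ (G : Pat Ag) (B : Finset Ag) (hB : B ≠ ∅), (∃ A ∈ G.1, B ⊆ A) → ∀ w v,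
      M.rel G w v → M.rel (Pat.ins B hB G) w v
  ne : ∀ w, ∃ G, M.rel G w w
  d : ∀ (G : Pat Ag) (w v), M.rel G w v ↔
      ∀ (B : Finset Ag) (hB : B ∈ G.1),
        M.rel (Pat.single B fun he => G.2 (by simpa [he] using hB)) w v

-- `w̄ = {B | ∃ G, B ∈ G and w ∈ alive(G)}`.
open Classical in
noncomputable def wbar {Ag W P : Type*} [DecidableEq Ag] [Fintype Ag]
    (M : PreModel Ag W P) (w : W) : Pat Ag :=
  ⟨Finset.univ.filter fun B => ∃ G : Pat Ag, B ∈ G.1 ∧ M.rel G w w, by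
    intro hmem
    obtain ⟨G, hB, -⟩ := (Finset.mem_filter.mp hmem).2
    exact G.2 hB⟩

/-- `w ≡ v` iff `w̄ = v̄` and `w ∼_{w̄} v`. -/
noncomputable def EquivW {Ag W P : Type*} [DecidableEq Ag] [Fintype Ag]
    (M : PreModel Ag W P) (w v : W) : Prop :=
  wbar M w = wbar M v ∧ M.rel (wbar M w) w v

/-- A pre-model is proper iff `w ≡ v` implies `w = v`. -/
noncomputable def Proper {Ag W P : Type*} [DecidableEq Ag] [Fintype Ag]
    (M : PreModel Ag W P) : Prop :=
  ∀ w v, EquivW M w v → w = v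


/-!
Soundness is an induction on derivations. The one unusual axiom is (P): in a δ-model, two
`∼_G`-related worlds at which `dead(G^C)` holds are `≡`-equivalent, hence equal when the model is
proper.

For completeness, a non-derivable `φ` is refuted in a canonical model. The canonical frame on
maximal consistent sets need not satisfy (D), so it is unravelled into the tree of its finite paths:
two paths are `B`-related when `B` is alive at both ends and every step of the tree path between
them is taken by a pattern covering `B`, and `∼_G` is the intersection of these relations over
`B ∈ G`, which is (D). Along a tree path whose steps all cover every `B ∈ G`, axioms Mono and Equiv
turn each step into a canonical `G`-step, which gives the truth lemma. Paths that are
`≡`-equivalent end in the same maximal consistent set by axiom (P), so the quotient by `≡` is a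
proper δ-model.
-/

variable {Ag : Type*}

namespace Pat

variable {G H : Pat Ag} {A B C : Finset Ag}

@[simp] lemma mem_single {hA : A ≠ ∅} : B ∈ (Pat.single A hA).1 ↔ B = A :=
  Finset.mem_singleton

lemma ne_empty_of_mem (hB : B ∈ G.1) : B ≠ ∅ := fun h => G.2 (h ▸ hB)

def empty : Pat Ag := ⟨∅, Finset.notMem_empty _⟩

def Covers (G : Pat Ag) (B : Finset Ag) : Prop := ∃ A ∈ G.1, B ⊆ A

variable [DecidableEq Ag]

@[simp] lemma mem_ins {hB : B ≠ ∅} : C ∈ (Pat.ins B hB G).1 ↔ C = B ∨ C ∈ G.1 :=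
  Finset.mem_insert

@[simp] lemma mem_union : B ∈ (G.union H).1 ↔ B ∈ G.1 ∨ B ∈ H.1 :=
  Finset.mem_union

end Pat

section Semantics

variable {P W : Type*} {p₀ : P}

@[simp] lemma pEval_impl {v : Form Ag P → Prop} {φ ψ : Form Ag P} :
    pEval v (φ.impl ψ) ↔ (pEval v φ → pEval v ψ) := by
  simp [Form.impl, pEval]

@[simp] lemma pEval_falsum {v : Form Ag P → Prop} : ¬ pEval v (Form.falsum p₀) := by
  simp [Form.falsum, pEval]

@[simp] lemma pEval_conjList {v : Form Ag P → Prop} :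
    ∀ l : List (Form Ag P), pEval v (Form.conjList p₀ l) ↔ ∀ ψ ∈ l, pEval v ψ
  | [] => by simp [Form.conjList, pEval]
  | φ :: l => by simp [Form.conjList, pEval, pEval_conjList l]

@[simp] lemma pEval_disjList {v : Form Ag P → Prop} :
    ∀ l : List (Form Ag P), pEval v (Form.disjList p₀ l) ↔ ∃ ψ ∈ l, pEval v ψ
  | [] => by simp [Form.disjList]
  | φ :: l => by
    simp only [Form.disjList, pEval, pEval_disjList l, not_and_or, not_not]
    simp [or_and_right, exists_or]

variable {M : PreModel Ag W P}

lemma pEval_kSat {w : W} : ∀ {φ : Form Ag P}, pEval (KSat M · w) φ ↔ KSat M φ w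
  | .atom _ | .box _ _ => Iff.rfl
  | .neg _ => not_congr pEval_kSat
  | .and _ _ => and_congr pEval_kSat pEval_kSat

lemma Tautology.kSat {φ : Form Ag P} (h : Tautology φ) (w : W) : KSat M φ w :=
  pEval_kSat.mp (h _)

lemma kSat_impl {φ ψ : Form Ag P} {w : W} :
    KSat M (φ.impl ψ) w ↔ (KSat M φ w → KSat M ψ w) := by
  rw [← pEval_kSat]; simp only [pEval_impl, pEval_kSat]

lemma kSat_conjList {l : List (Form Ag P)} {w : W} :
    KSat M (Form.conjList p₀ l) w ↔ ∀ ψ ∈ l, KSat M ψ w := by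
  rw [← pEval_kSat]; simp only [pEval_conjList, pEval_kSat]

lemma kSat_disjList {l : List (Form Ag P)} {w : W} :
    KSat M (Form.disjList p₀ l) w ↔ ∃ ψ ∈ l, KSat M ψ w := by
  rw [← pEval_kSat]; simp only [pEval_disjList, pEval_kSat]

lemma PreModel.rel_self_of_rel {G : Pat Ag} {w v : W} (h : M.rel G w v) : M.rel G w w :=
  M.trans G h (M.symm G h)

lemma kSat_falsum {w : W} : ¬ KSat M (Form.falsum p₀) w := fun h => h.2 h.1

lemma kSat_aliveF {G : Pat Ag} {w : W} : KSat M (Form.aliveF p₀ G) w ↔ M.rel G w w := by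
  simp only [Form.aliveF, KSat, kSat_falsum, imp_false, not_forall, not_not]
  exact ⟨fun ⟨_, h⟩ => M.rel_self_of_rel h, fun h => ⟨w, h⟩⟩

lemma kSat_deadF {G : Pat Ag} {w : W} :
    KSat M (deadF p₀ G) w ↔
      ∀ B (hB : B ∈ G.1), ¬ M.rel (Pat.single B (Pat.ne_empty_of_mem hB)) w w := by
  simp only [deadF, kSat_conjList, List.forall_mem_map, Finset.mem_toList, Finset.mem_attach,
    forall_const, Subtype.forall, KSat, kSat_aliveF]

end Semantics

section Soundness

variable [DecidableEq Ag] [Fintype Ag] {P W : Type*} {p₀ : P} {M : PreModel Ag W P}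

lemma IsDelta.mem_wbar (hM : IsDelta M) {w : W} {B : Finset Ag} :
    B ∈ (wbar M w).1 ↔ ∃ h : B ≠ ∅, M.rel (Pat.single B h) w w := by
  simp only [wbar, Finset.mem_filter, Finset.mem_univ, true_and]
  constructor
  · rintro ⟨G, hB, hG⟩
    exact ⟨Pat.ne_empty_of_mem hB, (hM.d G w w).mp hG B hB⟩
  · rintro ⟨h, hB⟩
    exact ⟨Pat.single B h, Finset.mem_singleton_self B, hB⟩

/-- A set alive at a world where `dead(G^C)` holds is covered by `G`, so (K4) and (K3) apply. -/
lemma IsDelta.rel_single_of_deadF (hM : IsDelta M) {G : Pat Ag} {w v : W} (hwv : M.rel G w v)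
    (hw : KSat M (deadF p₀ (patC G)) w) {B : Finset Ag} {hB : B ≠ ∅}
    (hBw : M.rel (Pat.single B hB) w w) : M.rel (Pat.single B hB) w v := by
  have hcov : G.Covers B := by
    by_contra hcov
    refine kSat_deadF.mp hw B ?_ hBw
    simp only [patC, Finset.mem_filter, Finset.mem_univ, true_and]
    exact ⟨hB, fun A hA hBA => hcov ⟨A, hA, hBA⟩⟩
  exact hM.k3 _ _ (Finset.singleton_subset_iff.mpr (Finset.mem_insert_self B G.1)) w v
    (hM.k4 G B hB hcov w v hwv)

lemma IsDelta.equivW_of_deadF (hM : IsDelta M) {G : Pat Ag} {w v : W} (hwv : M.rel G w v)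
    (hw : KSat M (deadF p₀ (patC G)) w) (hv : KSat M (deadF p₀ (patC G)) v) :
    EquivW M w v := by
  have wbar_subset : ∀ {x y}, M.rel G x y → KSat M (deadF p₀ (patC G)) x →
      (wbar M x).1 ⊆ (wbar M y).1 := by
    intro x y hxy hx B hB
    obtain ⟨h, hBx⟩ := hM.mem_wbar.mp hB
    exact hM.mem_wbar.mpr ⟨h, M.rel_self_of_rel (M.symm _ (hM.rel_single_of_deadF hxy hx hBx))⟩
  refine ⟨Subtype.ext (wbar_subset hwv hw |>.antisymm (wbar_subset (M.symm G hwv) hv)), ?_⟩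
  refine (hM.d _ w v).mpr fun B hB => ?_
  obtain ⟨h, hBw⟩ := hM.mem_wbar.mp hB
  exact hM.rel_single_of_deadF hwv hw hBw

theorem SynD.sound {φ : Form Ag P} (h : SynD p₀ φ) (hM : IsDelta M) (hP : Proper M) (w : W) :
    KSat M φ w := by
  induction h generalizing w with
  | taut ht => exact ht.kSat w
  | axK G φ ψ =>
    simp only [kSat_impl]
    exact fun h₁ h₂ v hv => kSat_impl.mp (h₁ v hv) (h₂ v hv)
  | axB G φ => exact kSat_impl.mpr fun hφ v hv hbox => hbox w (M.symm G hv) hφ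
  | ax4 G φ => exact kSat_impl.mpr fun hφ v hv u hu => hφ u (M.trans G hv hu)
  | axT G φ =>
    simp only [kSat_impl, kSat_aliveF]
    exact fun hG hφ => hφ w hG
  | axP G φ =>
    refine kSat_impl.mpr fun ⟨_, hw, hφ⟩ v hv => kSat_impl.mpr fun hdv => ?_
    rwa [← hP w v (hM.equivW_of_deadF hv hw hdv)]
  | axNE =>
    obtain ⟨G, hG⟩ := hM.ne w
    rw [neF, kSat_disjList]
    exact ⟨_, List.mem_map.mpr ⟨G, Finset.mem_toList.mpr (Finset.mem_univ G), rfl⟩,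
      kSat_aliveF.mpr hG⟩
  | axMono φ hGH => exact kSat_impl.mpr fun hφ v hv => hφ v (hM.k3 _ _ hGH w v hv)
  | axEquiv hB φ hcov => exact kSat_impl.mpr fun hφ v hv => hφ v (hM.k4 _ _ hB hcov w v hv)
  | axUnion G H =>
    simp only [kSat_impl, KSat, kSat_aliveF]
    refine fun ⟨hG, hH⟩ => (hM.d _ w w).mpr fun B hB => ?_
    rcases Pat.mem_union.mp hB with hB | hB
    · exact (hM.d G w w).mp hG B hB
    · exact (hM.d H w w).mp hH B hB
  | axClo hAB hA hB =>
    simp only [kSat_impl, kSat_aliveF]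
    exact hM.k2 _ _ _ hAB w hA hB
  | mp _ _ ih₁ ih₂ => exact kSat_impl.mp (ih₁ w) (ih₂ w)
  | nec G _ ih => exact fun v _ => ih v

end Soundness

namespace SynD

variable [DecidableEq Ag] [Fintype Ag] {P : Type*} {p₀ : P} {G H : Pat Ag} {φ ψ χ : Form Ag P}

lemma taut_mp (h : ∀ v, pEval v φ → pEval v ψ) (hφ : SynD p₀ φ) : SynD p₀ ψ :=
  mp (taut fun v => pEval_impl.mpr (h v)) hφ

lemma taut_mp₂ (h : ∀ v, pEval v φ → pEval v ψ → pEval v χ) (hφ : SynD p₀ φ)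
    (hψ : SynD p₀ ψ) : SynD p₀ χ :=
  mp (taut_mp (fun v hφ => pEval_impl.mpr (h v hφ)) hφ) hψ

lemma imp_trans (h₁ : SynD p₀ (φ.impl ψ)) (h₂ : SynD p₀ (ψ.impl χ)) : SynD p₀ (φ.impl χ) :=
  taut_mp₂ (fun v => by simpa using fun h₁ h₂ h => h₂ (h₁ h)) h₁ h₂

lemma box_imp_box (h : SynD p₀ (φ.impl ψ)) : SynD p₀ ((Form.box G φ).impl (Form.box G ψ)) :=
  mp (axK G φ ψ) (nec G h)

lemma box_and_imp : SynD p₀ ((Form.and (.box G φ) (.box G ψ)).impl (.box G (.and φ ψ))) :=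
  taut_mp₂ (fun v => by simp only [pEval, pEval_impl]; tauto)
    (box_imp_box (G := G) (taut (φ := φ.impl (ψ.impl (.and φ ψ))) fun _ => by
      simpa [pEval] using fun h₁ h₂ => ⟨h₁, h₂⟩))
    (axK G ψ (.and φ ψ))

lemma conjList_box_imp : ∀ l : List (Form Ag P),
    SynD p₀ ((Form.conjList p₀ (l.map (.box G))).impl (.box G (Form.conjList p₀ l)))
  | [] => taut_mp (fun v h => pEval_impl.mpr fun _ => h) (nec G (taut fun v => by simp))
  | φ :: l => imp_trans
      (taut_mp (fun v => by simp only [List.map_cons, Form.conjList, pEval, pEval_impl]; tauto)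
        (conjList_box_imp l))
      box_and_imp

lemma disjList_imp : ∀ {l : List (Form Ag P)}, (∀ ψ ∈ l, SynD p₀ (ψ.impl χ)) →
    SynD p₀ ((Form.disjList p₀ l).impl χ)
  | [], _ => taut fun v => by simp
  | ψ :: l, h => taut_mp₂ (fun v => by simp only [Form.disjList, pEval, pEval_impl]; tauto)
      (h ψ List.mem_cons_self) (disjList_imp fun ψ hψ => h ψ (List.mem_cons_of_mem _ hψ))

lemma aliveF_imp_aliveF (h : SynD p₀ ((Form.box G (.falsum p₀)).impl (.box H (.falsum p₀)))) :
    SynD p₀ ((Form.aliveF p₀ H).impl (.aliveF p₀ G)) :=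
  taut_mp (fun v h => by simp only [Form.aliveF, pEval, pEval_impl] at h ⊢; exact mt h) h

lemma aliveF_empty : SynD p₀ (Form.aliveF p₀ (Pat.empty : Pat Ag)) :=
  mp (disjList_imp (List.forall_mem_map.mpr fun G _ =>
    aliveF_imp_aliveF (axMono (G := Pat.empty) _ (Finset.empty_subset G.1)))) axNE

lemma box_imp_box_of_covers (h : ∀ B ∈ G.1, H.Covers B) :
    SynD p₀ ((Form.box G φ).impl (.box H φ)) := by
  suffices key : ∀ (s : Finset (Finset Ag)) (K : Pat Ag), K.1 = s ∪ H.1 →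
      (∀ B ∈ s, H.Covers B) → SynD p₀ ((Form.box K φ).impl (.box H φ)) from
    imp_trans (axMono φ Finset.subset_union_left) (key G.1 (G.union H) rfl h)
  intro s
  induction s using Finset.induction_on with
  | empty =>
    intro K hK _
    obtain rfl : K = H := Subtype.ext (by simpa using hK)
    exact taut fun v => pEval_impl.mpr id
  | insert a s _ ih =>
    intro K hK hs
    have hsub : s ∪ H.1 ⊆ K.1 := hK ▸ Finset.union_subset_union (Finset.subset_insert a s) le_rfl
    let K' : Pat Ag := ⟨s ∪ H.1, fun h => K.2 (hsub h)⟩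
    have ha : a ≠ ∅ := Pat.ne_empty_of_mem (G := K) (by simp [hK])
    have hK' : K = Pat.ins a ha K' := Subtype.ext (by simp [hK, K', Pat.ins, Finset.insert_union])
    obtain ⟨A, hA, haA⟩ := hs a (Finset.mem_insert_self a s)
    rw [hK']
    exact imp_trans (axEquiv ha φ ⟨A, Finset.mem_union_right _ hA, haA⟩)
      (ih K' rfl fun B hB => hs B (Finset.mem_insert_of_mem hB))

end SynD

section Consistency

variable [DecidableEq Ag] [Fintype Ag] {P : Type*} {p₀ : P} {S : Set (Form Ag P)}
  {φ ψ : Form Ag P}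

def Consistent (p₀ : P) (S : Set (Form Ag P)) : Prop :=
  ∀ l : List (Form Ag P), (∀ ψ ∈ l, ψ ∈ S) → ¬ SynD p₀ (.neg (Form.conjList p₀ l))

def MaxConsistent (p₀ : P) (S : Set (Form Ag P)) : Prop :=
  Consistent p₀ S ∧ ∀ φ, φ ∈ S ∨ .neg φ ∈ S

lemma exists_conjList_imp_neg_of_not_consistent_insert (h : ¬ Consistent p₀ (insert φ S)) :
    ∃ l : List (Form Ag P), (∀ ψ ∈ l, ψ ∈ S) ∧ SynD p₀ ((Form.conjList p₀ l).impl (.neg φ)) := by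
  classical
  simp only [Consistent, not_forall, not_not, exists_prop] at h
  obtain ⟨l, hl, hneg⟩ := h
  refine ⟨l.filter (· ≠ φ), fun ψ hψ => ?_, SynD.taut_mp (fun v hv => ?_) hneg⟩
  · simp only [List.mem_filter, decide_eq_true_eq] at hψ
    exact (hl ψ hψ.1).resolve_left hψ.2
  · simp only [pEval, pEval_conjList, pEval_impl, List.mem_filter, decide_eq_true_eq] at hv ⊢
    exact fun hrest hφ => hv fun ψ hψ => (eq_or_ne ψ φ).elim (· ▸ hφ) (hrest ψ ⟨hψ, ·⟩)

lemma Consistent.insert_or (hS : Consistent p₀ S) (φ : Form Ag P) :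
    Consistent p₀ (insert φ S) ∨ Consistent p₀ (insert (.neg φ) S) := by
  by_contra! h
  obtain ⟨l₁, hl₁, h₁⟩ := exists_conjList_imp_neg_of_not_consistent_insert h.1
  obtain ⟨l₂, hl₂, h₂⟩ := exists_conjList_imp_neg_of_not_consistent_insert h.2
  refine hS (l₁ ++ l₂) (by simpa [or_imp, forall_and] using ⟨hl₁, hl₂⟩) ?_
  refine SynD.taut_mp₂ (fun v h₁ h₂ => ?_) h₁ h₂
  simp only [pEval, pEval_conjList, pEval_impl, List.mem_append] at h₁ h₂ ⊢
  exact fun hall => h₂ (fun ψ hψ => hall ψ (.inr hψ)) (h₁ fun ψ hψ => hall ψ (.inl hψ))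

lemma consistent_sUnion {c : Set (Set (Form Ag P))} (hc : ∀ S ∈ c, Consistent p₀ S)
    (hdir : DirectedOn (· ⊆ ·) c) (hne : c.Nonempty) : Consistent p₀ (⋃₀ c) := by
  intro l hl
  obtain ⟨S, hS, hlS⟩ :=
    hdir.exists_mem_subset_of_finite_of_subset_sUnion hne l.finite_toSet fun ψ hψ => hl ψ hψ
  exact hc S hS l fun ψ hψ => hlS hψ

theorem Consistent.exists_maxConsistent_superset (hS : Consistent p₀ S) :
    ∃ T, S ⊆ T ∧ MaxConsistent p₀ T := by
  obtain ⟨T, hST, hmax⟩ := zorn_subset_nonempty {T | Consistent p₀ T}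
    (fun c hc hchain hne => ⟨⋃₀ c, consistent_sUnion hc hchain.directedOn hne,
      fun _ => Set.subset_sUnion_of_mem⟩) S hS
  refine ⟨T, hST, hmax.prop, fun φ => ?_⟩
  refine (hmax.prop.insert_or φ).imp (fun h => ?_) (fun h => ?_) <;>
    exact (hmax.eq_of_subset h (Set.subset_insert _ _)).symm ▸ Set.mem_insert _ _

lemma consistent_singleton_neg (hφ : ¬ SynD p₀ φ) : Consistent p₀ {.neg φ} := by
  by_contra h
  rw [Set.singleton_def] at h
  obtain ⟨l, hl, hder⟩ := exists_conjList_imp_neg_of_not_consistent_insert h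
  refine hφ (SynD.taut_mp (fun v hv => ?_) hder)
  simp only [pEval, pEval_impl, pEval_conjList, not_not] at hv
  exact hv fun ψ hψ => (hl ψ hψ).elim

namespace MaxConsistent

lemma mem_of_taut_imp (hS : MaxConsistent p₀ S) {l : List (Form Ag P)}
    (h : ∀ v, (∀ ψ ∈ l, pEval v ψ) → pEval v φ) (hl : ∀ ψ ∈ l, ψ ∈ S) : φ ∈ S :=
  (hS.2 φ).resolve_right fun hn => hS.1 (.neg φ :: l) (by simpa [hn] using hl)
    (SynD.taut fun v => by
      simp only [Form.conjList, pEval, pEval_conjList]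
      exact fun ⟨hnφ, hall⟩ => hnφ (h v hall))

lemma mem_of_derivable (hS : MaxConsistent p₀ S) (h : SynD p₀ φ) : φ ∈ S :=
  (hS.2 φ).resolve_right fun hn =>
    hS.1 [.neg φ] (by simpa using hn) (SynD.taut_mp (fun v hφ => by simpa [pEval] using hφ) h)

lemma mem_of_imp_mem (hS : MaxConsistent p₀ S) (h : φ.impl ψ ∈ S) (hφ : φ ∈ S) : ψ ∈ S :=
  hS.mem_of_taut_imp (l := [φ, φ.impl ψ]) (fun v => by simpa using fun h₁ h₂ => h₂ h₁)
    (by simp [hφ, h])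

lemma mem_of_derivable_imp (hS : MaxConsistent p₀ S) (h : SynD p₀ (φ.impl ψ)) (hφ : φ ∈ S) :
    ψ ∈ S :=
  hS.mem_of_imp_mem (hS.mem_of_derivable h) hφ

lemma neg_mem_iff (hS : MaxConsistent p₀ S) : .neg φ ∈ S ↔ φ ∉ S :=
  ⟨fun hn hφ => hS.1 [φ, .neg φ] (by simp [hφ, hn]) (SynD.taut fun _ => by simp [pEval]),
    (hS.2 φ).resolve_left⟩

lemma and_mem_iff (hS : MaxConsistent p₀ S) : .and φ ψ ∈ S ↔ φ ∈ S ∧ ψ ∈ S := by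
  refine ⟨fun h => ⟨?_, ?_⟩, fun ⟨hφ, hψ⟩ => ?_⟩
  · exact hS.mem_of_taut_imp (l := [.and φ ψ]) (fun _ hv => (hv _ List.mem_cons_self).1)
      (by simp [h])
  · exact hS.mem_of_taut_imp (l := [.and φ ψ]) (fun _ hv => (hv _ List.mem_cons_self).2)
      (by simp [h])
  · exact hS.mem_of_taut_imp (l := [φ, ψ]) (fun _ hv => ⟨hv φ (by simp), hv ψ (by simp)⟩)
      (by simp [hφ, hψ])

lemma conjList_mem (hS : MaxConsistent p₀ S) {l : List (Form Ag P)} (hl : ∀ ψ ∈ l, ψ ∈ S) :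
    Form.conjList p₀ l ∈ S :=
  hS.mem_of_taut_imp (fun _ => (pEval_conjList l).mpr) hl

lemma falsum_notMem (hS : MaxConsistent p₀ S) : Form.falsum p₀ ∉ S :=
  fun h => hS.1 [Form.falsum p₀] (by simpa using h) (SynD.taut fun _ => by simp [pEval])

end MaxConsistent

end Consistency

section Canonical

variable [DecidableEq Ag] [Fintype Ag] {P : Type*} {p₀ : P}

variable (Ag p₀) in
def MCS : Type _ := {S : Set (Form Ag P) // MaxConsistent p₀ S}

def CanRel (G : Pat Ag) (Δ Θ : MCS Ag p₀) : Prop :=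
  ∀ ψ, .box G ψ ∈ Δ.1 → ψ ∈ Θ.1

namespace CanRel

variable {G H : Pat Ag} {Δ Θ Ξ : MCS Ag p₀}

lemma aliveF_mem (h : CanRel G Δ Θ) : Form.aliveF p₀ G ∈ Δ.1 :=
  Δ.2.neg_mem_iff.mpr fun hbox => Θ.2.falsum_notMem (h _ hbox)

lemma refl (h : Form.aliveF p₀ G ∈ Δ.1) : CanRel G Δ Δ :=
  fun ψ hψ => Δ.2.mem_of_imp_mem (Δ.2.mem_of_derivable_imp (SynD.axT G ψ) h) hψ

lemma symm (h : CanRel G Δ Θ) : CanRel G Θ Δ := by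
  intro ψ hψ
  by_contra hn
  have hΔ := Δ.2.mem_of_derivable_imp (SynD.axB G (.neg ψ)) (Δ.2.neg_mem_iff.mpr hn)
  have hΘ : .box G (.neg (.neg ψ)) ∈ Θ.1 :=
    Θ.2.mem_of_derivable_imp (SynD.box_imp_box (SynD.taut fun _ => by simp [pEval])) hψ
  exact Θ.2.neg_mem_iff.mp (h _ hΔ) hΘ

lemma trans (h₁ : CanRel G Δ Θ) (h₂ : CanRel G Θ Ξ) : CanRel G Δ Ξ :=
  fun ψ hψ => h₂ _ (h₁ _ (Δ.2.mem_of_derivable_imp (SynD.ax4 G ψ) hψ))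

lemma of_covers (h : CanRel H Δ Θ) (hcov : ∀ B ∈ G.1, H.Covers B) : CanRel G Δ Θ :=
  fun ψ hψ => h ψ (Δ.2.mem_of_derivable_imp (SynD.box_imp_box_of_covers hcov) hψ)

lemma of_subset (h : CanRel H Δ Θ) (hGH : G.1 ⊆ H.1) : CanRel G Δ Θ :=
  h.of_covers fun B hB => ⟨B, hGH hB, subset_rfl⟩

end CanRel

lemma exists_canRel_notMem {Δ : MCS Ag p₀} {G : Pat Ag} {φ : Form Ag P}
    (h : .box G φ ∉ Δ.1) : ∃ Θ : MCS Ag p₀, CanRel G Δ Θ ∧ φ ∉ Θ.1 := by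
  have hcon : Consistent p₀ (insert (.neg φ) {ψ | .box G ψ ∈ Δ.1}) := by
    by_contra hcon
    obtain ⟨l, hl, hder⟩ := exists_conjList_imp_neg_of_not_consistent_insert hcon
    have hbox : .box G (Form.conjList p₀ l) ∈ Δ.1 :=
      Δ.2.mem_of_derivable_imp (SynD.conjList_box_imp l)
        (Δ.2.conjList_mem (List.forall_mem_map.mpr hl))
    refine h (Δ.2.mem_of_derivable_imp (SynD.box_imp_box (SynD.taut_mp (fun v hv => ?_) hder)) hbox)
    simp only [pEval, pEval_impl, not_not] at hv ⊢
    exact hv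
  obtain ⟨T, hsub, hT⟩ := hcon.exists_maxConsistent_superset
  exact ⟨⟨T, hT⟩, fun ψ hψ => hsub (Or.inr hψ), hT.neg_mem_iff.mp (hsub (Or.inl rfl))⟩

end Canonical

section AlivePat

variable [DecidableEq Ag] [Fintype Ag] {P : Type*} {p₀ : P} {Δ Θ : MCS Ag p₀}
  {A B : Finset Ag}

open Classical in
noncomputable def alivePat (Δ : MCS Ag p₀) : Pat Ag :=
  ⟨Finset.univ.filter fun B => ∃ h : B ≠ ∅, Form.aliveF p₀ (Pat.single B h) ∈ Δ.1,
    fun h => (Finset.mem_filter.mp h).2.1 rfl⟩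

lemma mem_alivePat : B ∈ (alivePat Δ).1 ↔ ∃ h : B ≠ ∅, Form.aliveF p₀ (Pat.single B h) ∈ Δ.1 := by
  simp [alivePat]

lemma aliveF_mem_of_subset_alivePat {G : Pat Ag} (hG : G.1 ⊆ (alivePat Δ).1) :
    Form.aliveF p₀ G ∈ Δ.1 := by
  obtain ⟨s, hs⟩ := G
  induction s using Finset.induction_on with
  | empty => exact Δ.2.mem_of_derivable SynD.aliveF_empty
  | insert a s _ ih =>
    obtain ⟨ha, haΔ⟩ := mem_alivePat.mp (hG (Finset.mem_insert_self a s))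
    have hs' : ∅ ∉ s := fun h => hs (Finset.mem_insert_of_mem h)
    have hunion := Δ.2.mem_of_derivable_imp (SynD.axUnion (Pat.single a ha) ⟨s, hs'⟩)
      (Δ.2.and_mem_iff.mpr ⟨haΔ, ih hs' ((Finset.subset_insert a s).trans hG)⟩)
    convert hunion using 2
    exact Subtype.ext (Finset.insert_eq a s)

lemma mem_alivePat_of_subset (hB : B ∈ (alivePat Δ).1) (hA : A ≠ ∅) (hAB : A ⊆ B) :
    A ∈ (alivePat Δ).1 := by
  obtain ⟨hB', hBΔ⟩ := mem_alivePat.mp hB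
  refine mem_alivePat.mpr ⟨hA, Δ.2.mem_of_derivable_imp (SynD.aliveF_imp_aliveF
    (SynD.box_imp_box_of_covers (H := Pat.single B hB') fun C hC => ?_)) hBΔ⟩
  exact ⟨B, Finset.mem_singleton_self B, Pat.mem_single.mp hC ▸ hAB⟩

lemma union_mem_alivePat (hA : A ∈ (alivePat Δ).1) (hB : B ∈ (alivePat Δ).1) :
    A ∪ B ∈ (alivePat Δ).1 := by
  obtain ⟨hA', hAΔ⟩ := mem_alivePat.mp hA
  obtain ⟨hB', hBΔ⟩ := mem_alivePat.mp hB
  have hAB : A ∪ B ≠ ∅ := fun h => hA' (Finset.union_eq_empty.mp h).1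
  have hU := Δ.2.mem_of_derivable_imp (SynD.axUnion (Pat.single A hA') (Pat.single B hB'))
    (Δ.2.and_mem_iff.mpr ⟨hAΔ, hBΔ⟩)
  exact mem_alivePat.mpr ⟨hAB, Δ.2.mem_of_derivable_imp (SynD.axClo hAB (by simp) (by simp)) hU⟩

lemma deadF_patC_alivePat_mem (hsub : (alivePat Θ).1 ⊆ (alivePat Δ).1) :
    deadF p₀ (patC (alivePat Δ)) ∈ Θ.1 := by
  refine Θ.2.conjList_mem (List.forall_mem_map.mpr fun ⟨B, hB⟩ _ => ?_)
  refine Θ.2.neg_mem_iff.mpr fun halive => ?_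
  simp only [patC, Finset.mem_filter] at hB
  exact hB.2.2 B (hsub (mem_alivePat.mpr ⟨_, halive⟩)) subset_rfl

lemma eq_of_canRel_alivePat (h : CanRel (alivePat Δ) Δ Θ)
    (hsub : (alivePat Θ).1 ⊆ (alivePat Δ).1) : Δ = Θ := by
  have hdead := deadF_patC_alivePat_mem (Δ := Δ) subset_rfl
  have hΔΘ : Δ.1 ⊆ Θ.1 := fun χ hχ =>
    Θ.2.mem_of_imp_mem (h _ (Δ.2.mem_of_derivable_imp (SynD.axP _ χ)
      (Δ.2.and_mem_iff.mpr ⟨aliveF_mem_of_subset_alivePat subset_rfl,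
        Δ.2.and_mem_iff.mpr ⟨hdead, hχ⟩⟩))) (deadF_patC_alivePat_mem hsub)
  refine Subtype.ext (hΔΘ.antisymm fun χ hχ => ?_)
  by_contra hn
  exact Θ.2.neg_mem_iff.mp (hΔΘ (Δ.2.neg_mem_iff.mpr hn)) hχ

end AlivePat

section Descends

variable {α : Type*} {p q : α → Prop} {a : α} {u w s : List α}

def Descends (p : α → Prop) (u s : List α) : Prop :=
  ∃ l, s = l ++ u ∧ ∀ a ∈ l, p a

namespace Descends

lemma refl (p : α → Prop) (u : List α) : Descends p u u := ⟨[], rfl, by simp⟩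

lemma cons (h : Descends p u s) (ha : p a) : Descends p u (a :: s) := by
  obtain ⟨l, rfl, hl⟩ := h
  exact ⟨a :: l, rfl, by simpa [ha] using hl⟩

lemma isSuffix (h : Descends p u s) : u <:+ s := by
  obtain ⟨l, rfl, -⟩ := h
  exact List.suffix_append l u

lemma trans (h₁ : Descends p u w) (h₂ : Descends p w s) : Descends p u s := by
  obtain ⟨l₁, rfl, hl₁⟩ := h₁
  obtain ⟨l₂, rfl, hl₂⟩ := h₂
  exact ⟨l₂ ++ l₁, by simp, by simpa [or_imp, forall_and] using ⟨hl₂, hl₁⟩⟩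

lemma mono (h : Descends p u s) (hpq : ∀ a, p a → q a) : Descends q u s := by
  obtain ⟨l, rfl, hl⟩ := h
  exact ⟨l, rfl, fun a ha => hpq a (hl a ha)⟩

lemma of_isSuffix_left (h : Descends p u s) (huw : u <:+ w) (hws : w <:+ s) :
    Descends p w s := by
  obtain ⟨l, rfl, hl⟩ := h
  obtain ⟨m, rfl⟩ := huw
  obtain ⟨k, hk⟩ := hws
  rw [← List.append_assoc, List.append_cancel_right_eq] at hk
  exact ⟨k, by rw [← hk, List.append_assoc], fun a ha => hl a (hk ▸ List.mem_append_left m ha)⟩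

lemma of_isSuffix_right (h : Descends p u s) (huw : u <:+ w) (hws : w <:+ s) :
    Descends p u w := by
  obtain ⟨l, rfl, hl⟩ := h
  obtain ⟨m, rfl⟩ := huw
  obtain ⟨k, hk⟩ := hws
  rw [← List.append_assoc, List.append_cancel_right_eq] at hk
  exact ⟨m, rfl, fun a ha => hl a (hk ▸ List.mem_append_right k ha)⟩

lemma forall_mem {ι : Type*} {I : Finset ι} {p : ι → α → Prop}
    (h : ∀ i ∈ I, Descends (p i) u s) (hus : u <:+ s) :
    Descends (fun a => ∀ i ∈ I, p i a) u s := by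
  obtain ⟨l, rfl⟩ := hus
  refine ⟨l, rfl, fun a ha i hi => ?_⟩
  obtain ⟨l', hl', hp⟩ := h i hi
  exact hp a (List.append_cancel_right hl' ▸ ha)

end Descends

end Descends

section Unravelling

variable [DecidableEq Ag] [Fintype Ag] {P : Type*} {p₀ : P} (Δ₀ : MCS Ag p₀)

/-- Paths in the canonical frame from `Δ₀` are stored latest step first: extending a path is
`List.cons`, and the initial segments of a path are its suffixes. -/
def pathEnd : List (Pat Ag × MCS Ag p₀) → MCS Ag p₀
  | [] => Δ₀
  | a :: _ => a.2

def IsPath : List (Pat Ag × MCS Ag p₀) → Prop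
  | [] => True
  | a :: s => IsPath s ∧ CanRel a.1 (pathEnd Δ₀ s) a.2

def Linked (B : Finset Ag) (s t : List (Pat Ag × MCS Ag p₀)) : Prop :=
  B ∈ (alivePat (pathEnd Δ₀ s)).1 ∧ B ∈ (alivePat (pathEnd Δ₀ t)).1 ∧
    ∃ u, Descends (fun a => a.1.Covers B) u s ∧ Descends (fun a => a.1.Covers B) u t

variable {Δ₀} {s t r : List (Pat Ag × MCS Ag p₀)} {A B : Finset Ag} {G : Pat Ag}

namespace Linked

lemma self (hB : B ∈ (alivePat (pathEnd Δ₀ s)).1) : Linked Δ₀ B s s :=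
  ⟨hB, hB, s, .refl _ _, .refl _ _⟩

lemma symm (h : Linked Δ₀ B s t) : Linked Δ₀ B t s :=
  ⟨h.2.1, h.1, h.2.2.imp fun _ hu => hu.symm⟩

lemma trans (h₁ : Linked Δ₀ B s t) (h₂ : Linked Δ₀ B t r) : Linked Δ₀ B s r := by
  obtain ⟨hs, -, u₁, hu₁s, hu₁t⟩ := h₁
  obtain ⟨-, hr, u₂, hu₂t, hu₂r⟩ := h₂
  refine ⟨hs, hr, ?_⟩
  rcases List.suffix_or_suffix_of_suffix hu₁t.isSuffix hu₂t.isSuffix with h | h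
  · exact ⟨u₁, hu₁s, (hu₁t.of_isSuffix_right h hu₂t.isSuffix).trans hu₂r⟩
  · exact ⟨u₂, (hu₂t.of_isSuffix_right h hu₁t.isSuffix).trans hu₁s, hu₂r⟩

lemma anti (h : Linked Δ₀ B s t) (hA : A ≠ ∅) (hAB : A ⊆ B) : Linked Δ₀ A s t := by
  obtain ⟨hs, ht, u, hus, hut⟩ := h
  have hcov (a : Pat Ag × MCS Ag p₀) : a.1.Covers B → a.1.Covers A :=
    fun ⟨C, hC, hBC⟩ => ⟨C, hC, hAB.trans hBC⟩
  exact ⟨mem_alivePat_of_subset hs hA hAB, mem_alivePat_of_subset ht hA hAB, u,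
    hus.mono hcov, hut.mono hcov⟩

end Linked

lemma canRel_empty_of_isPath (hs : IsPath Δ₀ s) : CanRel Pat.empty Δ₀ (pathEnd Δ₀ s) := by
  induction s with
  | nil => exact CanRel.refl (Δ₀.2.mem_of_derivable SynD.aliveF_empty)
  | cons a s ih => exact (ih hs.1).trans (hs.2.of_subset (Finset.empty_subset _))

lemma canRel_of_descends {u : List (Pat Ag × MCS Ag p₀)} (hs : IsPath Δ₀ s)
    (hus : Descends (fun a => ∀ B ∈ G.1, a.1.Covers B) u s)
    (hG : Form.aliveF p₀ G ∈ (pathEnd Δ₀ s).1) : CanRel G (pathEnd Δ₀ u) (pathEnd Δ₀ s) := by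
  obtain ⟨l, rfl, hl⟩ := hus
  induction l with
  | nil => exact CanRel.refl hG
  | cons a l ih =>
    have hstep : CanRel G (pathEnd Δ₀ (l ++ u)) a.2 := hs.2.of_covers (hl a List.mem_cons_self)
    exact (ih (fun b hb => hl b (List.mem_cons_of_mem _ hb)) hs.1 hstep.aliveF_mem).trans hstep

/-- The `B`-links for the various `B ∈ G` may pass through different initial segments; the longest
of them is a common one, so the whole path between `s` and `t` consists of `G`-steps. -/
lemma canRel_of_forall_linked (hs : IsPath Δ₀ s) (ht : IsPath Δ₀ t)
    (h : ∀ B ∈ G.1, Linked Δ₀ B s t) : CanRel G (pathEnd Δ₀ s) (pathEnd Δ₀ t) := by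
  rcases G.1.eq_empty_or_nonempty with hG | hG
  · obtain rfl : G = Pat.empty := Subtype.ext hG
    exact (canRel_empty_of_isPath hs).symm.trans (canRel_empty_of_isPath ht)
  choose! u hus hut using fun B hB => (h B hB).2.2
  obtain ⟨B₀, hB₀, hmax⟩ := G.1.exists_max_image (fun B => (u B).length) hG
  have hdesc {r} (hr : ∀ B ∈ G.1, Descends (fun a => a.1.Covers B) (u B) r) :
      Descends (fun a => ∀ B ∈ G.1, a.1.Covers B) (u B₀) r := by
    have hr₀ := (hr B₀ hB₀).isSuffix
    refine Descends.forall_mem (fun B hB => (hr B hB).of_isSuffix_left ?_ hr₀) hr₀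
    exact List.suffix_of_suffix_length_le (hr B hB).isSuffix hr₀ (hmax B hB)
  exact (canRel_of_descends hs (hdesc hus)
      (aliveF_mem_of_subset_alivePat fun B hB => (h B hB).1)).symm.trans
    (canRel_of_descends ht (hdesc hut) (aliveF_mem_of_subset_alivePat fun B hB => (h B hB).2.1))

end Unravelling

section CanonicalModel

variable [DecidableEq Ag] [Fintype Ag] {P : Type*} {p₀ : P} {Δ₀ : MCS Ag p₀}

variable (Δ₀) in
def PathEquiv (s t : {s // IsPath Δ₀ s}) : Prop :=
  alivePat (pathEnd Δ₀ s.1) = alivePat (pathEnd Δ₀ t.1) ∧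
    ∀ B ∈ (alivePat (pathEnd Δ₀ s.1)).1, Linked Δ₀ B s.1 t.1

variable (Δ₀) in
def PathEquiv.setoid : Setoid {s // IsPath Δ₀ s} where
  r := PathEquiv Δ₀
  iseqv :=
    ⟨fun _ => ⟨rfl, fun _ hB => .self hB⟩,
      fun h => ⟨h.1.symm, fun B hB => (h.2 B (h.1 ▸ hB)).symm⟩,
      fun h₁ h₂ => ⟨h₁.1.trans h₂.1, fun B hB => (h₁.2 B hB).trans (h₂.2 B (h₁.1 ▸ hB))⟩⟩

variable {s t : {s // IsPath Δ₀ s}}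

lemma PathEquiv.pathEnd_eq (h : PathEquiv Δ₀ s t) : pathEnd Δ₀ s.1 = pathEnd Δ₀ t.1 :=
  eq_of_canRel_alivePat (canRel_of_forall_linked s.2 t.2 h.2) (h.1 ▸ subset_rfl)

lemma PathEquiv.forall_linked {s' t' : {s // IsPath Δ₀ s}} {G : Pat Ag} (hs : PathEquiv Δ₀ s s')
    (ht : PathEquiv Δ₀ t t') (h : ∀ B ∈ G.1, Linked Δ₀ B s.1 t.1) :
    ∀ B ∈ G.1, Linked Δ₀ B s'.1 t'.1 := fun B hB =>
  ((hs.2 B (h B hB).1).symm.trans (h B hB)).trans (ht.2 B (h B hB).2.1)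

variable (Δ₀) in
noncomputable def canonicalModel : PreModel Ag (Quotient (PathEquiv.setoid Δ₀)) P where
  rel G := Quotient.lift₂ (fun s t => ∀ B ∈ G.1, Linked Δ₀ B s.1 t.1) fun _ _ _ _ hs ht =>
    propext ⟨PathEquiv.forall_linked hs ht,
      PathEquiv.forall_linked ((PathEquiv.setoid Δ₀).symm hs) ((PathEquiv.setoid Δ₀).symm ht)⟩
  symm G := by
    rintro ⟨s⟩ ⟨t⟩ h B hB
    exact (h B hB).symm
  trans G := by
    rintro ⟨s⟩ ⟨t⟩ ⟨r⟩ h₁ h₂ B hB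
    exact (h₁ B hB).trans (h₂ B hB)
  val := Quotient.lift (fun s => {p | .atom p ∈ (pathEnd Δ₀ s.1).1}) fun _ _ h => by
    rw [PathEquiv.pathEnd_eq h]

lemma kSat_canonicalModel_mk (φ : Form Ag P) (s : {s // IsPath Δ₀ s}) :
    KSat (canonicalModel Δ₀) φ (Quotient.mk _ s) ↔ φ ∈ (pathEnd Δ₀ s.1).1 := by
  induction φ generalizing s with
  | atom p => rfl
  | neg φ ih => exact (not_congr (ih s)).trans (pathEnd Δ₀ s.1).2.neg_mem_iff.symm
  | and φ ψ ihφ ihψ =>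
    exact (and_congr (ihφ s) (ihψ s)).trans (pathEnd Δ₀ s.1).2.and_mem_iff.symm
  | box G φ ih =>
    refine ⟨fun h => ?_, fun h w hw => ?_⟩
    · by_contra hbox
      obtain ⟨Θ, hΘ, hφ⟩ := exists_canRel_notMem hbox
      refine hφ ((ih ⟨(G, Θ) :: s.1, s.2, hΘ⟩).mp (h _ fun B hB => ?_))
      have hB' := hΘ.of_subset (G := Pat.single B (Pat.ne_empty_of_mem hB))
        (Finset.singleton_subset_iff.mpr hB)
      exact ⟨mem_alivePat.mpr ⟨_, hB'.aliveF_mem⟩, mem_alivePat.mpr ⟨_, hB'.symm.aliveF_mem⟩,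
        s.1, .refl _ _, (Descends.refl _ _).cons ⟨B, hB, subset_rfl⟩⟩
    · obtain ⟨t, rfl⟩ := Quotient.exists_rep w
      exact (ih t).mpr (canRel_of_forall_linked s.2 t.2 hw φ h)

theorem isDelta_canonicalModel : IsDelta (canonicalModel Δ₀) where
  k2 := by
    rintro G A B hAB ⟨s⟩ hA hB h C hC
    rw [Pat.mem_single.mp hC]
    exact .self (union_mem_alivePat (h A hA).1 (h B hB).1)
  k3 := by
    rintro G H hGH ⟨s⟩ ⟨t⟩ h B hB
    exact h B (hGH hB)
  k4 := by
    rintro G B hB ⟨A, hA, hBA⟩ ⟨s⟩ ⟨t⟩ h C hC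
    rcases Pat.mem_ins.mp hC with rfl | hC
    exacts [(h A hA).anti hB hBA, h C hC]
  ne := by
    rintro ⟨s⟩
    exact ⟨Pat.empty, fun B hB => absurd hB (Finset.notMem_empty B)⟩
  d := by
    rintro G ⟨s⟩ ⟨t⟩
    exact ⟨fun h B hB C hC => Pat.mem_single.mp hC ▸ h B hB,
      fun h B hB => h B hB B (Finset.mem_singleton_self B)⟩

lemma wbar_canonicalModel_mk (s : {s // IsPath Δ₀ s}) :
    wbar (canonicalModel Δ₀) (Quotient.mk _ s) = alivePat (pathEnd Δ₀ s.1) := by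
  refine Subtype.ext (Finset.ext fun B => isDelta_canonicalModel.mem_wbar.trans ?_)
  refine ⟨fun ⟨_, h⟩ => (h B (Finset.mem_singleton_self B)).1, fun hB => ?_⟩
  exact ⟨Pat.ne_empty_of_mem hB, fun C hC => Pat.mem_single.mp hC ▸ .self hB⟩

theorem proper_canonicalModel : Proper (canonicalModel Δ₀) := by
  rintro ⟨s⟩ ⟨t⟩ ⟨hwbar, hrel⟩
  change wbar _ (Quotient.mk _ s) = wbar _ (Quotient.mk _ t) at hwbar
  rw [wbar_canonicalModel_mk, wbar_canonicalModel_mk] at hwbar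
  change (canonicalModel Δ₀).rel (wbar _ (Quotient.mk _ s)) _ _ at hrel
  rw [wbar_canonicalModel_mk] at hrel
  exact Quotient.sound ⟨hwbar, hrel⟩

end CanonicalModel

/-- `Syn` is sound and complete with respect to proper δ-models. -/
theorem syn_sound_complete_proper_delta {Ag P : Type} [DecidableEq Ag] [Fintype Ag]
    (p₀ : P) (φ : Form Ag P) :
    SynD p₀ φ ↔
      ∀ (W : Type) (M : PreModel Ag W P), IsDelta M → Proper M → ∀ w, KSat M φ w := by
  refine ⟨fun h W M hM hP w => h.sound hM hP w, fun h => ?_⟩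
  by_contra hφ
  obtain ⟨T, hT, hmax⟩ := (consistent_singleton_neg hφ).exists_maxConsistent_superset
  let Δ₀ : MCS Ag p₀ := ⟨T, hmax⟩
  have hroot := h _ _ isDelta_canonicalModel proper_canonicalModel
    (Quotient.mk (PathEquiv.setoid Δ₀) ⟨[], trivial⟩)
  exact hmax.neg_mem_iff.mp (hT rfl) ((kSat_canonicalModel_mk φ _).mp hroot)
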